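/- arXiv:1806.10493 — 2 statements merged into one kernel-verified Lean document; each statement's English description precedes it below -/
import Mathlib

section
/- Let Ω be a compact subset of ℝ. The squared Wasserstein distance W₂² is a negative definite kernel on the set of Borel probability measures supported in Ω: for every n, all Borel probability measures μ₁, …, μₙ supported in Ω and all c₁, …, cₙ ∈ ℝ with c₁ + … + cₙ = 0, one has Σ_{i,j} c_i c_j W₂²(μ_i, μ_j) ≤ 0. -/
/-!
On the line, the monotone (comonotone) coupling `t ↦ (F_μ⁻¹ t, F_ν⁻¹ t)` of the uniform
measure on `(0, 1)` is optimal for the quadratic cost. Indeed `(x - y)² = (x - a)² + (y - a)² -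
2 (x - a)(y - a)`, the first two terms only depend on the marginals, and by the layer-cake formula
`∫ (x - a)(y - a) dπ = ∫∫_{s, t > a} π((s, ∞) × (t, ∞))`, where the Fréchet bound
`π((s, ∞) × (t, ∞)) ≤ min (μ(s, ∞), ν(t, ∞))` is attained by the monotone coupling. Hence
`W₂²(μ, ν) = ‖F_μ⁻¹ - F_ν⁻¹‖²` in `L²(0, 1)`, and squared distances in a Hilbert space form a
negative definite kernel: `∑ cᵢ cⱼ ‖vᵢ - vⱼ‖² = -2 ‖∑ cᵢ vᵢ‖²` when `∑ cᵢ = 0`.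
-/

open MeasureTheory
open scoped ENNReal

/-- `π` is a coupling of `μ` and `ν`: a probability measure on `ℝ × ℝ` whose first
marginal is `μ` and whose second marginal is `ν`. -/
def IsCoupling (π : Measure (ℝ × ℝ)) (μ ν : Measure ℝ) : Prop :=
  IsProbabilityMeasure π ∧ π.map Prod.fst = μ ∧ π.map Prod.snd = ν

/-- The squared Wasserstein distance `W₂²(μ,ν)`: the infimum over all couplings `π`
of `μ` and `ν` of the transport cost `∫ (x-y)² dπ(x,y)`. -/
noncomputable def W2sq (μ ν : Measure ℝ) : ℝ≥0∞ :=
  sInf {I : ℝ≥0∞ | ∃ π : Measure (ℝ × ℝ), IsCoupling π μ ν ∧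
    I = ∫⁻ p, ENNReal.ofReal ((p.1 - p.2) ^ 2) ∂π}

open ProbabilityTheory Set Filter

theorem sum_mul_mul_norm_sub_sq {E ι : Type*} [NormedAddCommGroup E] [InnerProductSpace ℝ E]
    [Fintype ι] (c : ι → ℝ) (v : ι → E) (hc : ∑ i, c i = 0) :
    ∑ i, ∑ j, c i * c j * ‖v i - v j‖ ^ 2 = -2 * ‖∑ i, c i • v i‖ ^ 2 := by
  have hleft : ∑ i, ∑ j, c i * c j * ‖v i‖ ^ 2 = 0 := by
    simp [mul_assoc, ← Finset.mul_sum, ← Finset.sum_mul, hc]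
  have hright : ∑ i, ∑ j, c i * c j * ‖v j‖ ^ 2 = 0 := by
    simp [mul_assoc, ← Finset.mul_sum, ← Finset.sum_mul, hc]
  have hcross : ∑ i, ∑ j, c i * c j * inner ℝ (v i) (v j) = ‖∑ i, c i • v i‖ ^ 2 := by
    rw [← real_inner_self_eq_norm_sq, sum_inner]
    simp only [inner_sum, real_inner_smul_left, real_inner_smul_right, ← mul_assoc,
      mul_comm (c _) (c _)]
  have hexpand (i j : ι) : c i * c j * ‖v i - v j‖ ^ 2
      = c i * c j * ‖v i‖ ^ 2 + c i * c j * ‖v j‖ ^ 2 - 2 * (c i * c j * inner ℝ (v i) (v j)) := by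
    rw [norm_sub_sq_real]; ring
  simp_rw [hexpand, Finset.sum_sub_distrib, Finset.sum_add_distrib, ← Finset.mul_sum, hleft,
    hright, hcross]
  ring

instance : IsProbabilityMeasure (volume.restrict (Ioo (0 : ℝ) 1)) := ⟨by simp⟩

/-- The quantile function `F_μ⁻¹`, the generalized inverse of the cdf. Only its values on `(0, 1)`
matter: elsewhere the set is empty or unbounded below and `sInf` returns the junk value `0`. -/
noncomputable def quantile (μ : Measure ℝ) (t : ℝ) : ℝ := sInf {x | t ≤ cdf μ x}

section quantile
variable {μ : Measure ℝ} {a b t x : ℝ}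

theorem quantile_le_iff (ht : t ∈ Ioo 0 1) : quantile μ t ≤ x ↔ t ≤ cdf μ x := by
  set S := {x | t ≤ cdf μ x}
  obtain ⟨z, hz⟩ := ((tendsto_cdf_atTop μ).eventually (lt_mem_nhds ht.2)).exists
  obtain ⟨y, hy⟩ := ((tendsto_cdf_atBot μ).eventually (gt_mem_nhds ht.1)).exists
  have hne : S.Nonempty := ⟨z, hz.le⟩
  have hbdd : BddBelow S := ⟨y, fun x hx => ((cdf μ).mono.reflect_lt (hy.trans_le hx)).le⟩
  -- right-continuity of the cdf puts the infimum in `S`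
  have hmem : t ≤ cdf μ (quantile μ t) := by
    rw [← (cdf μ).iInf_Ioi_eq]
    refine le_ciInf fun r => ?_
    obtain ⟨s, hs, hsr⟩ := exists_lt_of_csInf_lt hne r.2
    exact hs.trans ((cdf μ).mono hsr.le)
  exact ⟨fun h => hmem.trans ((cdf μ).mono h), fun h => csInf_le hbdd h⟩

theorem lt_quantile_iff (ht : t ∈ Ioo 0 1) : x < quantile μ t ↔ cdf μ x < t := by
  simpa only [not_le] using (quantile_le_iff ht).not

theorem monotoneOn_quantile : MonotoneOn (quantile μ) (Ioo 0 1) :=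
  fun _ hs _ ht hst => (quantile_le_iff hs).2 (hst.trans ((quantile_le_iff ht).1 le_rfl))

theorem aemeasurable_quantile : AEMeasurable (quantile μ) (volume.restrict (Ioo 0 1)) :=
  aemeasurable_restrict_of_monotoneOn measurableSet_Ioo monotoneOn_quantile

variable [IsProbabilityMeasure μ]

theorem map_quantile : (volume.restrict (Ioo 0 1)).map (quantile μ) = μ := by
  have : IsProbabilityMeasure ((volume.restrict (Ioo (0 : ℝ) 1)).map (quantile μ)) :=
    Measure.isProbabilityMeasure_map aemeasurable_quantile
  refine Measure.ext_of_Iic _ _ fun x => ?_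
  have hpre : quantile μ ⁻¹' Iic x ∩ Ioo 0 1 = Ioc 0 (cdf μ x) ∩ Ioo 0 1 := by
    ext t
    simp only [mem_inter_iff, mem_preimage, mem_Iic, mem_Ioc, and_congr_left_iff]
    exact fun ht => (quantile_le_iff ht).trans (and_iff_right ht.1).symm
  rw [Measure.map_apply_of_aemeasurable aemeasurable_quantile measurableSet_Iic,
    Measure.restrict_apply' measurableSet_Ioo, hpre,
    measure_congr ((ae_eq_refl _).inter Ioo_ae_eq_Ioc), Ioc_inter_Ioc, max_self,
    min_eq_left (cdf_le_one μ x), Real.volume_Ioc, sub_zero, ofReal_cdf]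

theorem quantile_mem_Icc (hμ : ∀ᵐ x ∂μ, x ∈ Icc a b) (ht : t ∈ Ioo 0 1) :
    quantile μ t ∈ Icc a b := by
  refine ⟨le_of_forall_lt fun y hy => (lt_quantile_iff ht).2 ?_, (quantile_le_iff ht).2 ?_⟩
  · have : μ (Iic y) = 0 :=
      measure_mono_null (fun x hx (hx' : x ∈ Icc a b) => hy.not_ge (hx'.1.trans hx)) (ae_iff.1 hμ)
    simpa [cdf_eq_real, measureReal_def, this] using ht.1
  · have : μ (Iic b)ᶜ = 0 :=
      measure_mono_null (fun x hx (hx' : x ∈ Icc a b) => hx hx'.2) (ae_iff.1 hμ)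
    rw [cdf_eq_real, measureReal_def, (prob_compl_eq_zero_iff measurableSet_Iic).1 this]
    exact ht.2.le

theorem memLp_quantile (hμ : ∀ᵐ x ∂μ, x ∈ Icc a b) :
    MemLp (quantile μ) 2 (volume.restrict (Ioo 0 1)) := by
  refine MemLp.of_bound aemeasurable_quantile.aestronglyMeasurable (max |a| |b|) ?_
  filter_upwards [ae_restrict_mem measurableSet_Ioo] with t ht
  exact abs_le_max_abs_abs (quantile_mem_Icc hμ ht).1 (quantile_mem_Icc hμ ht).2

end quantile

theorem lintegral_ofReal_sub_mul_ofReal_sub (ρ : Measure (ℝ × ℝ)) [SFinite ρ] (a b : ℝ) :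
    ∫⁻ p, ENNReal.ofReal (p.1 - a) * ENNReal.ofReal (p.2 - b) ∂ρ
      = ∫⁻ q in Ioi a ×ˢ Ioi b, ρ (Ioi q.1 ×ˢ Ioi q.2) := by
  set T := {x : (ℝ × ℝ) × (ℝ × ℝ) | x.2.1 < x.1.1 ∧ x.2.2 < x.1.2}
  have hT : MeasurableSet T := by measurability
  have hinner (p : ℝ × ℝ) : ENNReal.ofReal (p.1 - a) * ENNReal.ofReal (p.2 - b)
      = ∫⁻ q in Ioi a ×ˢ Ioi b, T.indicator 1 (p, q) := by
    change _ = ∫⁻ q in Ioi a ×ˢ Ioi b, (Iio p.1 ×ˢ Iio p.2).indicator 1 q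
    rw [lintegral_indicator_one (measurableSet_Iio.prod measurableSet_Iio),
      Measure.restrict_apply' (measurableSet_Ioi.prod measurableSet_Ioi), prod_inter_prod,
      Iio_inter_Ioi, Iio_inter_Ioi, Measure.volume_eq_prod, Measure.prod_prod, Real.volume_Ioo,
      Real.volume_Ioo]
  have houter (q : ℝ × ℝ) : ρ (Ioi q.1 ×ˢ Ioi q.2) = ∫⁻ p, T.indicator 1 (p, q) ∂ρ :=
    (lintegral_indicator_one (measurableSet_Ioi.prod measurableSet_Ioi)).symm
  simp_rw [hinner, houter]
  exact lintegral_lintegral_swap (measurable_one.indicator hT).aemeasurable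

noncomputable def comonotoneCoupling (μ ν : Measure ℝ) : Measure (ℝ × ℝ) :=
  (volume.restrict (Ioo 0 1)).map fun t => (quantile μ t, quantile ν t)

section coupling
variable {μ ν : Measure ℝ} {π : Measure (ℝ × ℝ)}

theorem aemeasurable_quantile_prod :
    AEMeasurable (fun t => (quantile μ t, quantile ν t)) (volume.restrict (Ioo 0 1)) :=
  aemeasurable_quantile.prodMk aemeasurable_quantile

theorem IsCoupling.measure_Ioi_prod_Ioi_le (h : IsCoupling π μ ν) (s t : ℝ) :
    π (Ioi s ×ˢ Ioi t) ≤ min (μ (Ioi s)) (ν (Ioi t)) := by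
  rw [← h.2.1, ← h.2.2, Measure.map_apply measurable_fst measurableSet_Ioi,
    Measure.map_apply measurable_snd measurableSet_Ioi]
  exact le_min (measure_mono fun p hp => hp.1) (measure_mono fun p hp => hp.2)

variable [IsProbabilityMeasure μ] [IsProbabilityMeasure ν]

theorem isCoupling_comonotoneCoupling : IsCoupling (comonotoneCoupling μ ν) μ ν := by
  refine ⟨Measure.isProbabilityMeasure_map aemeasurable_quantile_prod, ?_, ?_⟩
  · rw [comonotoneCoupling, AEMeasurable.map_map_of_aemeasurable measurable_fst.aemeasurable
      aemeasurable_quantile_prod]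
    exact map_quantile
  · rw [comonotoneCoupling, AEMeasurable.map_map_of_aemeasurable measurable_snd.aemeasurable
      aemeasurable_quantile_prod]
    exact map_quantile

theorem measure_Ioi_eq_ofReal_one_sub_cdf (s : ℝ) : μ (Ioi s) = ENNReal.ofReal (1 - cdf μ s) := by
  rw [← compl_Iic, prob_compl_eq_one_sub measurableSet_Iic, ← ofReal_cdf,
    ENNReal.ofReal_sub _ (cdf_nonneg μ s), ENNReal.ofReal_one]

theorem comonotoneCoupling_Ioi_prod_Ioi (s t : ℝ) :
    comonotoneCoupling μ ν (Ioi s ×ˢ Ioi t) = min (μ (Ioi s)) (ν (Ioi t)) := by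
  have hpre : (fun u => (quantile μ u, quantile ν u)) ⁻¹' (Ioi s ×ˢ Ioi t) ∩ Ioo 0 1
      = Ioo (max (cdf μ s) (cdf ν t)) 1 := by
    ext u
    simp only [mem_inter_iff, mem_preimage, mem_prod, mem_Ioi, mem_Ioo, max_lt_iff]
    constructor
    · rintro ⟨⟨hs, ht⟩, hu⟩
      exact ⟨⟨(lt_quantile_iff hu).1 hs, (lt_quantile_iff hu).1 ht⟩, hu.2⟩
    · rintro ⟨⟨hs, ht⟩, hu1⟩
      have hu : u ∈ Ioo 0 1 := ⟨(cdf_nonneg μ s).trans_lt hs, hu1⟩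
      exact ⟨⟨(lt_quantile_iff hu).2 hs, (lt_quantile_iff hu).2 ht⟩, hu⟩
  rw [comonotoneCoupling, Measure.map_apply_of_aemeasurable aemeasurable_quantile_prod
      (measurableSet_Ioi.prod measurableSet_Ioi), Measure.restrict_apply' measurableSet_Ioo,
    hpre, Real.volume_Ioo, measure_Ioi_eq_ofReal_one_sub_cdf, measure_Ioi_eq_ofReal_one_sub_cdf,
    ← ENNReal.ofReal_min, min_sub_sub_left]

theorem IsCoupling.lintegral_mul_le_comonotoneCoupling (h : IsCoupling π μ ν) (a b : ℝ) :
    ∫⁻ p, ENNReal.ofReal (p.1 - a) * ENNReal.ofReal (p.2 - b) ∂π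
      ≤ ∫⁻ p, ENNReal.ofReal (p.1 - a) * ENNReal.ofReal (p.2 - b) ∂comonotoneCoupling μ ν := by
  have := h.1
  have := (isCoupling_comonotoneCoupling (μ := μ) (ν := ν)).1
  rw [lintegral_ofReal_sub_mul_ofReal_sub, lintegral_ofReal_sub_mul_ofReal_sub]
  exact lintegral_mono fun q =>
    (h.measure_Ioi_prod_Ioi_le _ _).trans_eq (comonotoneCoupling_Ioi_prod_Ioi _ _).symm

end coupling

section cost
variable {μ ν : Measure ℝ} {π : Measure (ℝ × ℝ)} {a b : ℝ}

theorem IsCoupling.lintegral_sq_sub_add (h : IsCoupling π μ ν) (hμ : ∀ᵐ x ∂μ, a ≤ x)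
    (hν : ∀ᵐ y ∂ν, a ≤ y) :
    ∫⁻ p, ENNReal.ofReal ((p.1 - p.2) ^ 2) ∂π
        + 2 * ∫⁻ p, ENNReal.ofReal (p.1 - a) * ENNReal.ofReal (p.2 - a) ∂π
      = ∫⁻ x, ENNReal.ofReal ((x - a) ^ 2) ∂μ + ∫⁻ y, ENNReal.ofReal ((y - a) ^ 2) ∂ν := by
  obtain ⟨-, rfl, rfl⟩ := h
  have h1 : ∀ᵐ p ∂π, a ≤ p.1 := ae_of_ae_map measurable_fst.aemeasurable hμ
  have h2 : ∀ᵐ p ∂π, a ≤ p.2 := ae_of_ae_map measurable_snd.aemeasurable hν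
  rw [← lintegral_const_mul _ (by fun_prop), ← lintegral_add_left (by fun_prop),
    lintegral_map (by fun_prop) measurable_fst, lintegral_map (by fun_prop) measurable_snd,
    ← lintegral_add_left (by fun_prop)]
  refine lintegral_congr_ae ?_
  filter_upwards [h1, h2] with p hx hy
  rw [← ENNReal.ofReal_mul (sub_nonneg.2 hx), ← ENNReal.ofReal_ofNat 2,
    ← ENNReal.ofReal_mul zero_le_two,
    ← ENNReal.ofReal_add (sq_nonneg _) (by nlinarith [sub_nonneg.2 hx, sub_nonneg.2 hy]),
    ← ENNReal.ofReal_add (sq_nonneg _) (sq_nonneg _)]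
  ring_nf

theorem lintegral_ofReal_sub_sq_ne_top [IsFiniteMeasure μ] (hμ : ∀ᵐ x ∂μ, x ∈ Icc a b) :
    ∫⁻ x, ENNReal.ofReal ((x - a) ^ 2) ∂μ ≠ ∞ := by
  have hconst : ∫⁻ _, ENNReal.ofReal ((b - a) ^ 2) ∂μ ≠ ∞ := by
    rw [lintegral_const]
    exact ENNReal.mul_ne_top ENNReal.ofReal_ne_top (measure_ne_top μ _)
  refine ne_top_of_le_ne_top hconst ?_
  refine lintegral_mono_ae (hμ.mono fun x hx => ENNReal.ofReal_le_ofReal ?_)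
  nlinarith [hx.1, hx.2]

variable [IsProbabilityMeasure μ] [IsProbabilityMeasure ν]

theorem W2sq_eq_lintegral_comonotoneCoupling (hμ : ∀ᵐ x ∂μ, x ∈ Icc a b)
    (hν : ∀ᵐ y ∂ν, y ∈ Icc a b) :
    W2sq μ ν = ∫⁻ p, ENNReal.ofReal ((p.1 - p.2) ^ 2) ∂comonotoneCoupling μ ν := by
  have hμa : ∀ᵐ x ∂μ, a ≤ x := hμ.mono fun _ hx => hx.1
  have hνa : ∀ᵐ y ∂ν, a ≤ y := hν.mono fun _ hy => hy.1
  have hπ₀ := (isCoupling_comonotoneCoupling (μ := μ) (ν := ν)).lintegral_sq_sub_add hμa hνa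
  refine le_antisymm (sInf_le ⟨_, isCoupling_comonotoneCoupling, rfl⟩) (le_sInf ?_)
  rintro _ ⟨π, hπ, rfl⟩
  have hfin : 2 * ∫⁻ p, ENNReal.ofReal (p.1 - a) * ENNReal.ofReal (p.2 - a)
      ∂comonotoneCoupling μ ν ≠ ∞ :=
    ne_top_of_le_ne_top (ENNReal.add_ne_top.2 ⟨lintegral_ofReal_sub_sq_ne_top hμ,
      lintegral_ofReal_sub_sq_ne_top hν⟩) (le_add_self.trans_eq hπ₀)
  refine ENNReal.le_of_add_le_add_right hfin ?_
  rw [hπ₀, ← hπ.lintegral_sq_sub_add hμa hνa]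
  gcongr _ + 2 * ?_
  exact hπ.lintegral_mul_le_comonotoneCoupling a a

theorem W2sq_toReal_eq_norm_sub_sq (hμ : ∀ᵐ x ∂μ, x ∈ Icc a b) (hν : ∀ᵐ y ∂ν, y ∈ Icc a b) :
    (W2sq μ ν).toReal = ‖(memLp_quantile hμ).toLp - (memLp_quantile hν).toLp‖ ^ 2 := by
  have hF : ∀ᵐ t ∂volume.restrict (Ioo 0 1),
      inner ℝ (((memLp_quantile hμ).toLp - (memLp_quantile hν).toLp :) t)
        (((memLp_quantile hμ).toLp - (memLp_quantile hν).toLp :) t)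
      = (quantile μ t - quantile ν t) ^ 2 := by
    rw [← MemLp.toLp_sub]
    filter_upwards [((memLp_quantile hμ).sub (memLp_quantile hν)).coeFn_toLp] with t ht
    rw [ht, real_inner_self_eq_norm_sq, Pi.sub_apply, Real.norm_eq_abs, sq_abs]
  rw [← real_inner_self_eq_norm_sq, L2.inner_def, integral_congr_ae hF,
    integral_eq_lintegral_of_nonneg_ae (f := fun t => (quantile μ t - quantile ν t) ^ 2)
      (ae_of_all _ fun _ => sq_nonneg _)
      ((aemeasurable_quantile.sub aemeasurable_quantile).pow_const 2).aestronglyMeasurable,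
    W2sq_eq_lintegral_comonotoneCoupling hμ hν, comonotoneCoupling,
    lintegral_map' (by fun_prop) aemeasurable_quantile_prod]

end cost

/-- The squared Wasserstein distance is a negative definite kernel on the set of
Borel probability measures supported in a compact subset `Ω` of `ℝ`: for any such
measures `μ₁, …, μₙ` and reals `c₁, …, cₙ` with `∑ cᵢ = 0`, we have
`∑_{i,j} cᵢ cⱼ W₂²(μᵢ, μⱼ) ≤ 0`. -/
theorem W2sq_negative_definite (Ω : Set ℝ) (hΩ : IsCompact Ω)
    (n : ℕ) (μ : Fin n → Measure ℝ) (hprob : ∀ i, IsProbabilityMeasure (μ i))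
    (hsupp : ∀ i, μ i Ωᶜ = 0) (c : Fin n → ℝ) (hc : ∑ i, c i = 0) :
    ∑ i, ∑ j, c i * c j * (W2sq (μ i) (μ j)).toReal ≤ 0 := by
  obtain ⟨a, b, hΩab⟩ := bddBelow_bddAbove_iff_subset_Icc.1 ⟨hΩ.bddBelow, hΩ.bddAbove⟩
  have hμ (i : Fin n) : ∀ᵐ x ∂μ i, x ∈ Icc a b :=
    measure_mono_null (compl_subset_compl.2 hΩab) (hsupp i)
  let Q (i : Fin n) := (memLp_quantile (hμ i)).toLp
  calc ∑ i, ∑ j, c i * c j * (W2sq (μ i) (μ j)).toReal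
      = ∑ i, ∑ j, c i * c j * ‖Q i - Q j‖ ^ 2 := by
        simp only [Q, W2sq_toReal_eq_norm_sub_sq (hμ _) (hμ _)]
    _ = -2 * ‖∑ i, c i • Q i‖ ^ 2 := sum_mul_mul_norm_sub_sq c Q hc
    _ ≤ 0 := mul_nonpos_of_nonpos_of_nonneg (by norm_num) (sq_nonneg _)
end

section
/- (Schoenberg) Let X be a set and let K : X × X → ℝ be a symmetric negative definite kernel. Then for every t > 0, the function (x,y) ↦ exp(−t K(x,y)) is a positive definite kernel on X. -/
/-!
Centring `K` at a point `z` turns it into a positive semidefinite kernel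
`M(x, y) = K(x, z) + K(z, y) - K(x, y) - K(z, z)`. Entrywise powers of a positive semidefinite
matrix are positive semidefinite by the Schur product theorem, hence so is its entrywise
exponential, a series of such powers with nonnegative coefficients. Finally
`exp(-t K(x, y)) = d(x) d(y) exp(t M(x, y))` with `d(x) = exp(t K(z, z) / 2 - t K(x, z))`, and
multiplying entrywise by the rank-one matrix `d dᵀ` preserves positive semidefiniteness.
-/

open Finset Matrix
open scoped ComplexOrder

namespace Matrix

variable {ι : Type*} [Fintype ι]

theorem posSemidef_iff_sum_mul_mul_nonneg {A : Matrix ι ι ℝ} :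
    A.PosSemidef ↔ A.IsSymm ∧ ∀ c : ι → ℝ, 0 ≤ ∑ i, ∑ j, c i * c j * A i j := by
  simp only [posSemidef_iff_dotProduct_mulVec, isHermitian_iff_isSymm, star_trivial, dotProduct,
    mulVec, mul_sum]
  refine and_congr_right fun _ => forall_congr' fun c => ?_
  simp only [mul_left_comm, mul_comm]

theorem PosSemidef.map_pow {𝕜 : Type*} [RCLike 𝕜] {A : Matrix ι ι 𝕜} (hA : A.PosSemidef) :
    ∀ m : ℕ, (A.map (· ^ m)).PosSemidef
  | 0 => by
    convert posSemidef_vecMulVec_self_star (1 : ι → 𝕜)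
    ext; simp [vecMulVec]
  | m + 1 => by
    convert (hA.map_pow m).hadamard hA using 1
    ext; simp [pow_succ]

theorem PosSemidef.map_exp {A : Matrix ι ι ℝ} (hA : A.PosSemidef) :
    (A.map Real.exp).PosSemidef := by
  refine posSemidef_iff_sum_mul_mul_nonneg.2
    ⟨(isHermitian_iff_isSymm.1 hA.isHermitian).map _, fun c => ?_⟩
  have hexp (a : ℝ) : HasSum (fun m : ℕ => a ^ m / m.factorial) (Real.exp a) := by
    simpa [Real.exp_eq_exp_ℝ] using NormedSpace.expSeries_div_hasSum_exp a
  have hseries : HasSum (fun m : ℕ => (∑ i, ∑ j, c i * c j * A i j ^ m) / m.factorial)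
      (∑ i, ∑ j, c i * c j * Real.exp (A i j)) := by
    simp only [sum_div, mul_div_assoc]
    exact hasSum_sum fun i _ => hasSum_sum fun j _ => (hexp (A i j)).mul_left _
  refine hseries.nonneg fun m => div_nonneg ?_ m.factorial.cast_nonneg
  exact (posSemidef_iff_sum_mul_mul_nonneg.1 (hA.map_pow m)).2 c

end Matrix

def IsNegDefKernel {X : Type*} (K : X → X → ℝ) : Prop :=
  (∀ x y, K x y = K y x) ∧
    ∀ (n : ℕ) (x : Fin n → X) (c : Fin n → ℝ),
      ∑ i, c i = 0 → ∑ i, ∑ j, c i * c j * K (x i) (x j) ≤ 0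

namespace IsNegDefKernel

variable {X : Type*} {K : X → X → ℝ}

theorem posSemidef_centered (hK : IsNegDefKernel K) (z : X) {n : ℕ} (x : Fin n → X) :
    (of fun i j => K (x i) z + K z (x j) - K (x i) (x j) - K z z).PosSemidef := by
  refine posSemidef_iff_sum_mul_mul_nonneg.2 ⟨IsSymm.ext fun i j => ?_, fun c => ?_⟩
  · simp only [of_apply]
    rw [hK.1 (x j) z, hK.1 z (x i), hK.1 (x j) (x i)]
    ring
  · -- the centred form at `c` is minus the form of `K` at `z, x₀, x₁, …` with weights
    -- `-∑ c, c₀, c₁, …`, which sum to zero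
    have h := hK.2 (n + 1) (Fin.cons z x) (Fin.cons (-∑ i, c i) c) (by simp [Fin.sum_univ_succ])
    simp only [Fin.sum_univ_succ, Fin.cons_zero, Fin.cons_succ] at h
    simp only [of_apply, mul_add, mul_sub, neg_mul, mul_neg, sum_add_distrib, sum_sub_distrib,
      sum_neg_distrib, mul_sum, sum_mul] at h ⊢
    rw [sum_comm (f := fun j i => c i * c j * K z z),
      sum_comm (f := fun j i => c i * c j * K z (x j))] at h
    linarith

theorem posSemidef_exp_neg_mul (hK : IsNegDefKernel K) {t : ℝ} (ht : 0 ≤ t) {n : ℕ}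
    (x : Fin n → X) : (of fun i j => Real.exp (-(t * K (x i) (x j)))).PosSemidef := by
  obtain _ | n := n
  · rw [Subsingleton.elim (of _) 0]
    exact .zero
  set z := x 0
  set d : Fin (n + 1) → ℝ := fun i => Real.exp (t * K z z / 2 - t * K (x i) z)
  have hexp := ((hK.posSemidef_centered z x).smul ht).map_exp
  have heq : (of fun i j => Real.exp (-(t * K (x i) (x j)))) = vecMulVec d (star d) ⊙
      (t • of fun i j => K (x i) z + K z (x j) - K (x i) (x j) - K z z).map Real.exp := by
    ext i j
    simp only [of_apply, hadamard_apply, vecMulVec_apply, star_trivial, map_apply,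
      Matrix.smul_apply, smul_eq_mul, d, ← Real.exp_add]
    rw [hK.1 z (x j)]
    congr 1
    ring
  rw [heq]
  exact (posSemidef_vecMulVec_self_star d).hadamard hexp

end IsNegDefKernel

/-- (Schoenberg) Let `K : X × X → ℝ` be a symmetric negative definite kernel. Then
for every `t > 0`, the function `(x,y) ↦ exp(-t K(x,y))` is a positive definite
kernel on `X`. -/
theorem schoenberg_exp_neg_positive_definite {X : Type*} (K : X → X → ℝ)
    (hsymm : ∀ x y, K x y = K y x)
    (hneg : ∀ (n : ℕ) (x : Fin n → X) (c : Fin n → ℝ), (∑ i, c i = 0) →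
      ∑ i, ∑ j, c i * c j * K (x i) (x j) ≤ 0)
    (t : ℝ) (ht : 0 < t) :
    ∀ (n : ℕ) (x : Fin n → X) (c : Fin n → ℝ),
      0 ≤ ∑ i, ∑ j, c i * c j * Real.exp (-(t * K (x i) (x j))) := fun _ x c =>
  (posSemidef_iff_sum_mul_mul_nonneg.1
    (IsNegDefKernel.posSemidef_exp_neg_mul ⟨hsymm, hneg⟩ ht.le x)).2 c
end
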